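/- Assume that (μ(n), n ≥ 1) is non-increasing and that μ has finite type d < ∞. Let X₀ be a locally finite configuration with front at position 0 (i.e. max{j : X₀(j) ≠ 0} = 0), and for δ < 0 let X₀^{(δ)} be the configuration defined by X₀^{(δ)}(j) := X₀(j) for j ≠ δ and X₀^{(δ)}(δ) := ∞. Then for any δ, k ∈ ℤ with δ + d < k ≤ 0, the IBM(μ) started from X₀^{(δ)} satisfies P(X_∞^{(δ)}(k) = X₀^{(δ)}(k)) > 0, i.e. with positive probability no ball is ever added to bin k. -/

import Mathlib

open MeasureTheory ProbabilityTheory Filter Set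
open scoped ENNReal Topology Classical

noncomputable section

/-- A configuration of balls: the number of balls (in `ℤ₊ ∪ {∞}`) in each bin. -/
abbrev Config := ℤ → ℕ∞

/-- A valid configuration: the support is nonempty and bounded above. -/
def IsConfig (X : Config) : Prop :=
  (∃ j, X j ≠ 0) ∧ ∃ M : ℤ, ∀ j, X j ≠ 0 → j ≤ M

/-- `tailSum X j = ∑_{i ≥ j} X i`. -/
def tailSum (X : Config) (j : ℤ) : ℕ∞ :=
  ⨆ m : ℤ, ∑ i ∈ Finset.Icc j m, X i

/-- One step of the infinite-bin model dynamics: `Phi ξ X` adds one ball to the bin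
immediately to the right of the bin containing the `ξ`-th rightmost ball of `X`
(i.e. to bin `B(X,ξ) + 1` where `B(X,ξ) = sup {j : ∑_{i ≥ j} X i ≥ ξ}`), and does
nothing when `B(X,ξ) = -∞`, i.e. when no bin `j` satisfies `∑_{i ≥ j} X i ≥ ξ`. -/
def Phi (ξ : ℕ) (X : Config) : Config := fun j =>
  X j + (if (ξ : ℕ∞) ≤ tailSum X (j - 1) ∧ ¬ (ξ : ℕ∞) ≤ tailSum X j then 1 else 0)

/-- The infinite-bin model driven by the sequence `ξ`, started from `X₀`:
`X_{n+1} = Phi (ξ n) X_n`. -/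
def ibm (X₀ : Config) (ξ : ℕ → ℕ) : ℕ → Config
  | 0 => X₀
  | n + 1 => Phi (ξ n) (ibm X₀ ξ n)

/-- `X_∞(k)`: the limit (= supremum, by monotonicity) of the number of balls in bin `k`. -/
def ibmLimit (X₀ : Config) (ξ : ℕ → ℕ) (k : ℤ) : ℕ∞ :=
  ⨆ n, ibm X₀ ξ n k

/-- `ξ` is a sequence of i.i.d. random variables with law `μ` on `(Ω, P)`. -/
def IsIIDSeq {Ω : Type*} [MeasurableSpace Ω] (P : Measure Ω) (μ : Measure ℕ)
    (ξ : ℕ → Ω → ℕ) : Prop :=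
  (∀ n, Measurable (ξ n)) ∧
    iIndepFun ξ P ∧ ∀ n, P.map (ξ n) = μ

/-- The barrier configuration `X̂₀`: an infinite bin at `0`, all other bins empty. -/
def barrier : Config := fun j => if j = 0 then ⊤ else 0

/-- The tail `μ̄(j) = μ({j, j+1, ...})` of a distribution on `ℕ`. -/
def tailμ (μ : Measure ℕ) (j : ℕ) : ℝ≥0∞ := μ {i | j ≤ i}

/-- `μ` (represented by the i.i.d. driving sequence `ξ` on `(Ω, P)`) is of type `d`:
almost surely, `d = inf {k ≥ 1 : X̂_∞(k) < ∞}` for the IBM started from the barrier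
configuration (with `inf ∅ = ∞` in `ℕ ∪ {∞}`). -/
def IsTypeOf {Ω : Type*} [MeasurableSpace Ω] (P : Measure Ω) (ξ : ℕ → Ω → ℕ)
    (d : ℕ∞) : Prop :=
  ∀ᵐ ω ∂P, sInf {k : ℕ∞ | ∃ m : ℕ, 1 ≤ m ∧ k = (m : ℕ∞) ∧
    ibmLimit barrier (fun i => ξ i ω) (m : ℤ) < ⊤} = d

/-- `δ ∈ ℤ ∪ {-∞}` is the position `δ(X) = sup {j : X j = ∞}` of the rightmost
infinite bin ("barrier") of `X`, with `sup ∅ = -∞ = ⊥`. -/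
def IsRightmostBarrier (X : Config) (δ : WithBot ℤ) : Prop :=
  (∀ j : ℤ, X j = ⊤ → (j : WithBot ℤ) ≤ δ) ∧
    (∀ j : ℤ, (j : WithBot ℤ) ≤ δ → ∃ i : ℤ, j ≤ i ∧ X i = ⊤)

end

/-!
With an infinite bin on the left and all driving values `ξ n ≥ 1`, the dynamics is best read on
the tail sums `T_n(j) = ∑_{i ≥ j} X_n(i)`: step `n` adds one ball to `T(j)` exactly when
`ξ n ≤ T_n(j - 1)`. Since `μ {1} > 0` by monotonicity, the value `1` occurs infinitely often, so
every tail to the right of the infinite bin grows without bound.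

A ball lands in bin `j` only when `T_n(j) < ξ n ≤ T_n(j - 1) = X_n(j - 1) + T_n(j)`. If bin `j - 1`
stays below `C`, this is a window of width `C` above a level that tends to infinity. The expected
time the tail spends at a level `t` is at most `1 / μ {1}`, and `μ` has summable tails, so by a
Borel–Cantelli argument bin `j` is hit only finitely often and stays bounded as well. Starting
from bin `d` of the barrier process, bounded by the definition of the type, this propagates to all
bins to the right of `d`; comparing tails transfers it to the process started from `X₀^(δ)`, whose
bin `k` is therefore a.s. hit only finitely often.

Hence some prefix `ξ_0, …, ξ_{N-1}` followed by a future that never hits bin `k` has positive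
probability. Replacing every step of the prefix that hits bin `k` by the value `1`, which puts the
ball beyond the front instead, leaves all tails up to `k` unchanged and keeps positive probability;
by independence of prefix and future, bin `k` then never receives a ball.
-/

namespace IBM

lemma exists_lt_count_of_infinite {p : ℕ → Prop} [DecidablePred p] (h : {n | p n}.Infinite)
    (t : ℕ) : ∃ n, t < Nat.count p n :=
  ⟨Nat.nth p t + 1, by
    rw [Nat.count_succ, Nat.count_nth_of_infinite h, if_pos (Nat.nth_mem_of_infinite h t)]
    omega⟩

lemma count_le_count_add_count (p q : ℕ → Prop) (n : ℕ) :
    Nat.count p n ≤ Nat.count q n + Nat.count (fun m => ¬ q m ∧ p m) n := by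
  simp only [Nat.count_eq_card_filter_range]
  refine (Finset.card_le_card fun m hm => ?_).trans (Finset.card_union_le _ _)
  simp only [Finset.mem_union, Finset.mem_filter] at hm ⊢
  tauto

def VanishesAbove (X : Config) (M : ℤ) : Prop := ∀ i, M < i → X i = 0

section TailSum

variable {X : Config} {M : ℤ}

lemma tailSum_eq_sum (hM : VanishesAbove X M) (j : ℤ) :
    tailSum X j = ∑ i ∈ Finset.Icc j M, X i := by
  refine le_antisymm (iSup_le fun m => ?_) (le_iSup (fun m => ∑ i ∈ Finset.Icc j m, X i) M)
  rw [← Finset.sum_filter_of_ne (p := fun i => i ≤ M) fun i _ hi => by_contra fun h =>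
    hi (hM i (not_le.mp h))]
  exact Finset.sum_le_sum_of_subset fun i hi => by
    simp only [Finset.mem_filter, Finset.mem_Icc] at hi ⊢; omega

lemma tailSum_antitone (X : Config) : Antitone (tailSum X) := fun _ _ h =>
  iSup_mono fun _ => Finset.sum_le_sum_of_subset (Finset.Icc_subset_Icc_left h)

lemma le_tailSum (X : Config) (j : ℤ) : X j ≤ tailSum X j :=
  le_iSup_of_le j (by simp)

lemma tailSum_eq_zero (hM : VanishesAbove X M) {j : ℤ} (hj : M < j) : tailSum X j = 0 := by
  rw [tailSum_eq_sum hM, Finset.Icc_eq_empty (by omega), Finset.sum_empty]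

lemma tailSum_eq_add_tailSum_succ (hM : VanishesAbove X M) (j : ℤ) :
    tailSum X j = X j + tailSum X (j + 1) := by
  rcases le_or_gt j M with hj | hj
  · rw [tailSum_eq_sum hM, tailSum_eq_sum hM, ← Finset.sum_insert (by simp)]
    congr 1
    ext i; simp only [Finset.mem_Icc, Finset.mem_insert]; omega
  · rw [tailSum_eq_zero hM hj, hM j hj, tailSum_eq_zero hM (by omega), add_zero]

lemma vanishesAbove_Phi (hM : VanishesAbove X M) (ξ : ℕ) : VanishesAbove (Phi ξ X) (M + 1) := by
  intro i hi
  rw [Phi, hM i (by omega), zero_add, ite_eq_right_iff]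
  rintro ⟨h, h'⟩
  rw [tailSum_eq_zero hM (by omega), nonpos_iff_eq_zero, Nat.cast_eq_zero] at h
  simp [h] at h'

/-- When some tail is infinite, a ball is put right after the largest bin `B` whose tail holds
at least `ξ` balls; this `B` is finite because the support is bounded above. -/
lemma tailSum_Phi (hM : VanishesAbove X M) {b : ℤ} (hb : tailSum X b = ⊤) {ξ : ℕ} (hξ : 1 ≤ ξ)
    (j : ℤ) :
    tailSum (Phi ξ X) j = tailSum X j + if (ξ : ℕ∞) ≤ tailSum X (j - 1) then 1 else 0 := by
  have hbdd : ∀ z, (ξ : ℕ∞) ≤ tailSum X z → z ≤ M := fun z hz => by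
    by_contra h
    rw [tailSum_eq_zero hM (by omega), nonpos_iff_eq_zero, Nat.cast_eq_zero] at hz
    omega
  obtain ⟨B, hB, hBmax⟩ := Int.exists_greatest_of_bdd ⟨M, hbdd⟩ ⟨b, by simp [hb]⟩
  have hle : ∀ z, (ξ : ℕ∞) ≤ tailSum X z ↔ z ≤ B := fun z =>
    ⟨hBmax z, fun hz => hB.trans (tailSum_antitone X hz)⟩
  have hPhi : Phi ξ X = fun i => X i + if i = B + 1 then 1 else 0 := by
    funext i
    simp only [Phi, hle]
    congr 1
    exact if_congr (by omega) rfl rfl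
  have hM' : VanishesAbove X (M + 1) := fun i hi => hM i (by omega)
  rw [tailSum_eq_sum (vanishesAbove_Phi hM ξ) j, hPhi, Finset.sum_add_distrib,
    ← tailSum_eq_sum hM' j, Finset.sum_ite_eq']
  have := hbdd B hB
  simp only [hle, Finset.mem_Icc]
  exact congrArg _ (if_congr (by omega) rfl rfl)

end TailSum

structure HasInfiniteTail (Z : Config) (b : ℤ) : Prop where
  vanishesAbove : ∃ M, VanishesAbove Z M
  tailSum_eq_top : tailSum Z b = ⊤

noncomputable def ibmTail (Z : Config) (η : ℕ → ℕ) (n : ℕ) (j : ℤ) : ℕ∞ := tailSum (ibm Z η n) j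

def AddsBallAt (Z : Config) (η : ℕ → ℕ) (k : ℤ) (n : ℕ) : Prop :=
  (η n : ℕ∞) ≤ ibmTail Z η n (k - 1) ∧ ¬ (η n : ℕ∞) ≤ ibmTail Z η n k

section Dynamics

variable {Z : Config} {η : ℕ → ℕ}

lemma ibm_succ_apply (Z : Config) (η : ℕ → ℕ) (n : ℕ) (k : ℤ) :
    ibm Z η (n + 1) k = ibm Z η n k + if AddsBallAt Z η k n then 1 else 0 := by
  simp only [ibm, Phi, AddsBallAt, ibmTail]
  congr

lemma ibm_apply (Z : Config) (η : ℕ → ℕ) (n : ℕ) (k : ℤ) :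
    ibm Z η n k = Z k + Nat.count (AddsBallAt Z η k) n := by
  induction n with
  | zero => simp [ibm]
  | succ n ih => rw [ibm_succ_apply, ih, Nat.count_succ]; split_ifs <;> simp [add_assoc]

lemma ibmLimit_eq_of_forall_not_addsBallAt {k : ℤ} (h : ∀ n, ¬ AddsBallAt Z η k n) :
    ibmLimit Z η k = Z k := by
  simp [ibmLimit, ibm_apply, Nat.count_iff_forall_not.mpr fun m _ => h m]

lemma ibmLimit_ne_top_of_finite {k : ℤ} (hk : Z k ≠ ⊤) (h : {n | AddsBallAt Z η k n}.Finite) :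
    ibmLimit Z η k ≠ ⊤ := by
  refine ne_top_of_le_ne_top (b := Z k + h.toFinset.card) (by simp [hk]) (iSup_le fun n => ?_)
  rw [ibm_apply]
  gcongr
  exact_mod_cast Nat.count_le_card h n

lemma vanishesAbove_ibm {M : ℤ} (hM : VanishesAbove Z M) (η : ℕ → ℕ) (n : ℕ) :
    VanishesAbove (ibm Z η n) (M + n) := by
  induction n with
  | zero => simpa [ibm] using hM
  | succ n ih => simpa [ibm, add_assoc] using vanishesAbove_Phi ih (η n)

lemma ibm_congr {η' : ℕ → ℕ} {n : ℕ} (h : ∀ i < n, η i = η' i) : ibm Z η n = ibm Z η' n := by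
  induction n with
  | zero => rfl
  | succ n ih => simp only [ibm, ih fun i hi => h i (by omega), h n (by omega)]

lemma ibmTail_congr {η' : ℕ → ℕ} {n : ℕ} (h : ∀ i < n, η i = η' i) (j : ℤ) :
    ibmTail Z η n j = ibmTail Z η' n j := by
  rw [ibmTail, ibm_congr h, ibmTail]

lemma addsBallAt_congr {η' : ℕ → ℕ} {k : ℤ} {n : ℕ} (h : ∀ i ≤ n, η i = η' i) :
    AddsBallAt Z η k n ↔ AddsBallAt Z η' k n := by
  simp only [AddsBallAt, ibmTail_congr fun i (hi : i < n) => h i hi.le, h n le_rfl]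

lemma ibm_add (N n : ℕ) : ibm Z η (N + n) = ibm (ibm Z η N) (fun i => η (N + i)) n := by
  induction n with
  | zero => rfl
  | succ n ih => rw [← add_assoc, ibm, ih]; rfl

lemma addsBallAt_add (k : ℤ) (N n : ℕ) :
    AddsBallAt Z η k (N + n) ↔ AddsBallAt (ibm Z η N) (fun i => η (N + i)) k n := by
  simp only [AddsBallAt, ibmTail, ibm_add]

lemma ibmTail_sub_one {M : ℤ} (hM : VanishesAbove Z M) (n : ℕ) (j : ℤ) :
    ibmTail Z η n (j - 1) = ibm Z η n (j - 1) + ibmTail Z η n j := by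
  rw [ibmTail, tailSum_eq_add_tailSum_succ (vanishesAbove_ibm hM η n), sub_add_cancel, ibmTail]

variable {b : ℤ} (hZ : HasInfiniteTail Z b) (hη : ∀ i, 1 ≤ η i)
include hZ hη

lemma HasInfiniteTail.ibm (n : ℕ) : HasInfiniteTail (ibm Z η n) b := by
  obtain ⟨M, hM⟩ := hZ.vanishesAbove
  refine ⟨⟨M + n, vanishesAbove_ibm hM η n⟩, ?_⟩
  induction n with
  | zero => exact hZ.tailSum_eq_top
  | succ n ih => rw [_root_.ibm, tailSum_Phi (vanishesAbove_ibm hM η n) ih (hη n), ih, top_add]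

lemma ibmTail_succ (n : ℕ) (j : ℤ) :
    ibmTail Z η (n + 1) j
      = ibmTail Z η n j + if (η n : ℕ∞) ≤ ibmTail Z η n (j - 1) then 1 else 0 := by
  obtain ⟨M, hM⟩ := (hZ.ibm hη n).vanishesAbove
  exact tailSum_Phi hM (hZ.ibm hη n).tailSum_eq_top (hη n) j

lemma ibmTail_eq (n : ℕ) (j : ℤ) :
    ibmTail Z η n j
      = tailSum Z j + Nat.count (fun m => (η m : ℕ∞) ≤ ibmTail Z η m (j - 1)) n := by
  induction n with
  | zero => rw [Nat.count_zero]; simp [ibmTail, ibm]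
  | succ n ih => rw [ibmTail_succ hZ hη, ih, Nat.count_succ]; split_ifs <;> simp [add_assoc]

lemma ibmTail_mono (j : ℤ) : Monotone (ibmTail Z η · j) := fun m n h => by
  simp only [ibmTail_eq hZ hη _ j]
  gcongr

lemma ibmTail_ne_top {j : ℤ} (hj : tailSum Z j ≠ ⊤) (n : ℕ) : ibmTail Z η n j ≠ ⊤ := by
  simp [ibmTail_eq hZ hη n j, hj]

lemma ibmTail_add_one (n : ℕ) : ibmTail Z η n (b + 1) = tailSum Z (b + 1) + n := by
  have : ∀ m, (η m : ℕ∞) ≤ ibmTail Z η m (b + 1 - 1) := fun m => by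
    simp [ibmTail, (hZ.ibm hη m).tailSum_eq_top]
  rw [ibmTail_eq hZ hη, Nat.count_iff_forall.mpr fun m _ => this m]

lemma ibmTail_lt_succ {n : ℕ} {j : ℤ} (hj : tailSum Z j ≠ ⊤) (hn : (η n : ℕ∞) ≤ ibmTail Z η n j) :
    ibmTail Z η n j < ibmTail Z η (n + 1) j := by
  have h : (η n : ℕ∞) ≤ ibmTail Z η n (j - 1) := hn.trans (tailSum_antitone _ (by omega))
  rw [ibmTail_succ hZ hη, if_pos h]
  exact (ENat.lt_add_one_iff (ibmTail_ne_top hZ hη hj n)).2 le_rfl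

/-- Once the tail at `j` is nonempty, every step with `η n = 1` feeds the tail at `j + 1`. -/
lemma unbounded_ibmTail_succ (h1 : {n | η n = 1}.Infinite) {j : ℤ}
    (hj : ∀ t : ℕ, ∃ n, (t : ℕ∞) < ibmTail Z η n j) (t : ℕ) :
    ∃ n, (t : ℕ∞) < ibmTail Z η n (j + 1) := by
  obtain ⟨n₀, hn₀⟩ := hj 0
  have hinf : {m | (η m : ℕ∞) ≤ ibmTail Z η m (j + 1 - 1)}.Infinite := by
    refine (h1.sdiff (Set.finite_lt_nat n₀)).mono fun m hm => ?_
    obtain ⟨hm1, hm⟩ := hm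
    simp only [Set.mem_ofPred_eq, not_lt, add_sub_cancel_right] at hm1 hm ⊢
    rw [hm1, Nat.cast_one, Order.one_le_iff_pos]
    exact hn₀.trans_le (ibmTail_mono hZ hη j hm)
  obtain ⟨n, hn⟩ := exists_lt_count_of_infinite hinf t
  refine ⟨n, ?_⟩
  rw [ibmTail_eq hZ hη]
  exact (Nat.cast_lt.2 hn).trans_le le_add_self

end Dynamics

section Comparison

variable {Z Z' : Config} {b b' : ℤ} {η : ℕ → ℕ}
  (hZ : HasInfiniteTail Z b) (hZ' : HasInfiniteTail Z' b') (hη : ∀ i, 1 ≤ η i)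
include hZ hZ' hη

lemma ibmTail_add_le (h0 : ∀ i, 1 ≤ i → tailSum Z (b + i) ≤ tailSum Z' (b' + i)) (n : ℕ)
    {i : ℤ} (hi : 1 ≤ i) : ibmTail Z η n (b + i) ≤ ibmTail Z' η n (b' + i) := by
  induction n generalizing i with
  | zero => exact h0 i hi
  | succ n ih =>
    rw [ibmTail_succ hZ hη, ibmTail_succ hZ' hη]
    refine add_le_add (ih hi) ?_
    obtain rfl | hi := eq_or_lt_of_le hi
    · simp [ibmTail, (hZ.ibm hη n).tailSum_eq_top, (hZ'.ibm hη n).tailSum_eq_top]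
    · have hle := ih (i := i - 1) (by omega)
      rw [add_sub_assoc, add_sub_assoc]
      by_cases h : (η n : ℕ∞) ≤ ibmTail Z η n (b + (i - 1))
      · rw [if_pos h, if_pos (h.trans hle)]
      · rw [if_neg h]
        exact zero_le

lemma ibmTail_eq_of_tailSum_eq {k : ℤ} (h0 : ∀ j ≤ k, tailSum Z j = tailSum Z' j) (n : ℕ)
    {j : ℤ} (hj : j ≤ k) : ibmTail Z η n j = ibmTail Z' η n j := by
  induction n generalizing j with
  | zero => exact h0 j hj
  | succ n ih => rw [ibmTail_succ hZ hη, ibmTail_succ hZ' hη, ih hj, ih (j := j - 1) (by omega)]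

lemma addsBallAt_iff_of_tailSum_eq {k : ℤ} (h0 : ∀ j ≤ k, tailSum Z j = tailSum Z' j) (n : ℕ) :
    AddsBallAt Z η k n ↔ AddsBallAt Z' η k n := by
  simp only [AddsBallAt, ibmTail_eq_of_tailSum_eq hZ hZ' hη h0 n le_rfl,
    ibmTail_eq_of_tailSum_eq hZ hZ' hη h0 n (j := k - 1) (by omega)]

lemma ibmTail_le_add_count (j j' : ℤ) (n : ℕ) :
    ibmTail Z' η n j' ≤ ibmTail Z η n j + tailSum Z' j' + Nat.count (fun m =>
      ¬ (η m : ℕ∞) ≤ ibmTail Z η m (j - 1) ∧ (η m : ℕ∞) ≤ ibmTail Z' η m (j' - 1)) n := by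
  have hcount := count_le_count_add_count (fun m => (η m : ℕ∞) ≤ ibmTail Z' η m (j' - 1))
    (fun m => (η m : ℕ∞) ≤ ibmTail Z η m (j - 1)) n
  rw [ibmTail_eq hZ' hη, ibmTail_eq hZ hη]
  calc _ ≤ tailSum Z' j' + ((Nat.count (fun m => (η m : ℕ∞) ≤ ibmTail Z η m (j - 1)) n : ℕ∞)
        + Nat.count (fun m => ¬ (η m : ℕ∞) ≤ ibmTail Z η m (j - 1)
          ∧ (η m : ℕ∞) ≤ ibmTail Z' η m (j' - 1)) n) := by
        gcongr; exact_mod_cast hcount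
    _ ≤ _ := by
        rw [add_left_comm, ← add_assoc]; gcongr; exact le_add_self

lemma ibm_le_of_ibmTail_le (h0 : ∀ i, 1 ≤ i → tailSum Z (b + i) ≤ tailSum Z' (b' + i)) {n : ℕ}
    {i : ℤ} (hi : 1 ≤ i) (hfin : tailSum Z' (b' + i + 1) ≠ ⊤) {c : ℕ∞}
    (hc : ibmTail Z' η n (b' + i) ≤ ibmTail Z η n (b + i) + c) :
    ibm Z' η n (b' + i) ≤ ibm Z η n (b + i) + c := by
  obtain ⟨M, hM⟩ := hZ.vanishesAbove
  obtain ⟨M', hM'⟩ := hZ'.vanishesAbove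
  have hdom := ibmTail_add_le hZ hZ' hη h0 n (i := i + 1) (by omega)
  rw [← add_assoc, ← add_assoc] at hdom
  rw [← add_sub_cancel_right (b' + i) 1, ibmTail_sub_one hM', ← add_sub_cancel_right (b + i) 1,
    ibmTail_sub_one hM, add_sub_cancel_right, add_sub_cancel_right] at hc
  refine (ENat.add_le_add_iff_right (ibmTail_ne_top hZ' hη hfin n)).1 (hc.trans ?_)
  rw [add_right_comm]
  gcongr

end Comparison

/-- A step with value `1` puts its ball just beyond the front, hence not into bin `k` as long as
the tail at `k` is nonempty. -/
noncomputable def avoidBin (Z : Config) (η : ℕ → ℕ) (k : ℤ) : ℕ → ℕ :=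
  fun n => if AddsBallAt Z η k n then 1 else η n

section AvoidBin

variable {Z : Config} {b k : ℤ} {η : ℕ → ℕ}

lemma one_le_avoidBin (hη : ∀ i, 1 ≤ η i) (i : ℕ) : 1 ≤ avoidBin Z η k i := by
  unfold avoidBin; split_ifs <;> simp [hη i]

variable (hZ : HasInfiniteTail Z b) (hη : ∀ i, 1 ≤ η i)
include hZ hη

lemma ibmTail_avoidBin (n : ℕ) {j : ℤ} (hj : j ≤ k) :
    ibmTail Z (avoidBin Z η k) n j = ibmTail Z η n j := by
  induction n generalizing j with
  | zero => rfl
  | succ n ih =>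
    rw [ibmTail_succ hZ (one_le_avoidBin hη), ibmTail_succ hZ hη, ih hj, ih (j := j - 1) (by omega)]
    by_cases hhit : AddsBallAt Z η k n
    · have h1 : (η n : ℕ∞) ≤ ibmTail Z η n (j - 1) :=
        hhit.1.trans (tailSum_antitone _ (by omega))
      have h2 : ((1 : ℕ) : ℕ∞) ≤ ibmTail Z η n (j - 1) := (Nat.one_le_cast.mpr (hη n)).trans h1
      rw [avoidBin, if_pos hhit, if_pos h1, if_pos h2]
    · rw [avoidBin, if_neg hhit]

lemma not_addsBallAt_avoidBin (hk : 1 ≤ tailSum Z k) (n : ℕ) :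
    ¬ AddsBallAt Z (avoidBin Z η k) k n := by
  have hT : ∀ j ≤ k, ibmTail Z (avoidBin Z η k) n j = ibmTail Z η n j :=
    fun j hj => ibmTail_avoidBin hZ hη n hj
  by_cases hhit : AddsBallAt Z η k n
  · rintro ⟨-, hfar⟩
    refine hfar ?_
    rw [avoidBin, if_pos hhit, hT k le_rfl, Nat.cast_one]
    exact hk.trans (ibmTail_mono hZ hη k (Nat.zero_le n))
  · rwa [AddsBallAt, hT k le_rfl, hT (k - 1) (by omega), avoidBin, if_neg hhit]

end AvoidBin

lemma vanishesAbove_barrier : VanishesAbove barrier 0 := fun _ hi => if_neg hi.ne'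

lemma hasInfiniteTail_barrier : HasInfiniteTail barrier 0 :=
  ⟨⟨0, vanishesAbove_barrier⟩, top_le_iff.1 ((le_tailSum barrier 0).trans_eq' (by simp [barrier]))⟩

lemma tailSum_barrier_eq_zero {j : ℤ} (hj : 0 < j) : tailSum barrier j = 0 :=
  tailSum_eq_zero vanishesAbove_barrier hj

/-- The configuration `X^(δ)` of the paper. -/
def withBarrier (X : Config) (δ : ℤ) : Config := fun j => if j = δ then ⊤ else X j

section WithBarrier

variable {X : Config} {δ M : ℤ} (hX : VanishesAbove X M) (hδ : δ ≤ M)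
include hX hδ

lemma vanishesAbove_withBarrier : VanishesAbove (withBarrier X δ) M :=
  fun i hi => by simp [withBarrier, hX i hi, show i ≠ δ by omega]

lemma hasInfiniteTail_withBarrier : HasInfiniteTail (withBarrier X δ) δ :=
  ⟨⟨M, vanishesAbove_withBarrier hX hδ⟩,
    top_le_iff.1 ((le_tailSum _ δ).trans_eq' (by simp [withBarrier]))⟩

lemma tailSum_withBarrier_ne_top (hloc : ∀ j, X j ≠ ⊤) {j : ℤ} (hj : δ < j) :
    tailSum (withBarrier X δ) j ≠ ⊤ := by
  rw [tailSum_eq_sum (vanishesAbove_withBarrier hX hδ), ENat.sum_ne_top]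
  intro i hi
  simp only [Finset.mem_Icc] at hi
  simp [withBarrier, show i ≠ δ by omega, hloc i]

end WithBarrier

section IID

variable {Ω : Type*} {ξ : ℕ → Ω → ℕ}

abbrev coordSigma (ξ : ℕ → Ω → ℕ) (S : Set ℕ) : MeasurableSpace Ω :=
  ⨆ i ∈ S, MeasurableSpace.comap (ξ i) inferInstance

lemma coordSigma_mono {S T : Set ℕ} (h : S ⊆ T) : coordSigma ξ S ≤ coordSigma ξ T :=
  biSup_mono h

/-- The coordinates in `s` take only countably many joint values. -/
lemma measurableSet_coordSigma {p : (ℕ → ℕ) → Prop} {s : Finset ℕ} (hp : DependsOn p s) :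
    MeasurableSet[coordSigma ξ s] {ω | p (ξ · ω)} := by
  let R : Ω → (s → ℕ) := fun ω i => ξ i ω
  have hR : Measurable[coordSigma ξ s] R :=
    @measurable_pi_lambda _ _ _ (coordSigma ξ s) _ R fun i =>
      Measurable.of_comap_le (le_iSup₂ (f := fun i (_ : i ∈ (s : Set ℕ)) =>
        MeasurableSpace.comap (ξ i) inferInstance) i.1 i.2)
  have : {ω | p (ξ · ω)} = R ⁻¹' {x | p fun i => if h : i ∈ s then x ⟨i, h⟩ else 0} := by
    ext ω
    exact iff_of_eq (hp fun i hi => by simp [R, Finset.mem_coe.mp hi])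
  rw [this]
  exact hR (Set.to_countable _).measurableSet

variable [MeasurableSpace Ω] {P : Measure Ω} {μ : Measure ℕ}

lemma coordSigma_le (hξ : IsIIDSeq P μ ξ) (S : Set ℕ) : coordSigma ξ S ≤ ‹MeasurableSpace Ω› :=
  iSup₂_le fun i _ => (hξ.1 i).comap_le

lemma indep_coordSigma (hξ : IsIIDSeq P μ ξ) {S T : Set ℕ} (h : Disjoint S T) :
    Indep (coordSigma ξ S) (coordSigma ξ T) P :=
  indep_iSup_of_disjoint (fun i => (hξ.1 i).comap_le) ((iIndepFun_iff_iIndep _ _ _).1 hξ.2.1) h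

lemma measure_preimage (hξ : IsIIDSeq P μ ξ) (n : ℕ) (A : Set ℕ) : P (ξ n ⁻¹' A) = μ A := by
  rw [← hξ.2.2 n, Measure.map_apply (hξ.1 n) (DiscreteMeasurableSpace.forall_measurableSet A)]

lemma measure_biInter_preimage (hξ : IsIIDSeq P μ ξ) (s : Finset ℕ) (A : ℕ → Set ℕ) :
    P (⋂ i ∈ s, ξ i ⁻¹' A i) = ∏ i ∈ s, μ (A i) := by
  rw [iIndepFun_iff_measure_inter_preimage_eq_mul.mp hξ.2.1 s fun i _ =>
    DiscreteMeasurableSpace.forall_measurableSet (A i)]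
  exact Finset.prod_congr rfl fun i _ => measure_preimage hξ i (A i)

lemma measure_prefix_eq (hξ : IsIIDSeq P μ ξ) (a : ℕ → ℕ) (N : ℕ) :
    P {ω | ∀ i < N, ξ i ω = a i} = ∏ i ∈ Finset.range N, μ {a i} := by
  rw [← measure_biInter_preimage hξ]
  congr 1
  ext ω
  simp

lemma ae_infinite_setOf_eq (hξ : IsIIDSeq P μ ξ) {a : ℕ} (ha : μ {a} ≠ 0) :
    ∀ᵐ ω ∂P, {n | ξ n ω = a}.Infinite := by
  have hmeas : ∀ n, MeasurableSet (ξ n ⁻¹' {a}) := fun n => hξ.1 n (measurableSet_singleton a)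
  have hindep : iIndepSet (fun n => ξ n ⁻¹' {a}) P :=
    (iIndepSet_iff_meas_biInter hmeas).mpr fun s => by
      simp [measure_biInter_preimage hξ s, measure_preimage hξ]
  have hsum : ∑' n, P (ξ n ⁻¹' {a}) = ⊤ := by
    simp only [measure_preimage hξ]
    exact ENNReal.tsum_const_eq_top_of_ne_zero ha
  have := hindep.isProbabilityMeasure
  have := measure_limsup_eq_one hmeas hindep hsum
  rw [← prob_compl_eq_zero_iff (MeasurableSet.measurableSet_limsup hmeas)] at this
  refine measure_mono_null (fun ω hω => ?_) this
  simpa [mem_limsup_iff_frequently_mem, Nat.frequently_atTop_iff_infinite] using hω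

end IID

lemma tsum_measure_singleton_add_le (μ : Measure ℕ) {a b : ℕ} (hab : b < a) :
    ∑' s, μ {a + s} ≤ μ {x | b < x} := by
  refine ENNReal.tsum_le_of_sum_range_le fun n => ?_
  have : ∑ s ∈ Finset.range n, μ {a + s} = ∑ x ∈ (Finset.range n).map (addLeftEmbedding a), μ {x} :=
    by rw [Finset.sum_map]; rfl
  rw [this, sum_measure_singleton]
  refine measure_mono fun x hx => ?_
  obtain ⟨s, -, rfl⟩ := Finset.mem_map.1 (Finset.mem_coe.1 hx)
  exact show b < a + s by omega

lemma tendsto_measure_Ioi (μ : Measure ℕ) [IsFiniteMeasure μ] :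
    Tendsto (fun a : ℕ => μ {x | a < x}) atTop (𝓝 0) := by
  have h := tendsto_measure_iInter_atTop (μ := μ) (s := fun a : ℕ => {x : ℕ | a < x})
    (fun _ => (DiscreteMeasurableSpace.forall_measurableSet _).nullMeasurableSet)
    (fun a b hab x hx => lt_of_le_of_lt hab hx) ⟨0, measure_ne_top _ _⟩
  have h0 : (⋂ a : ℕ, {x : ℕ | a < x}) = ∅ := Set.iInter_eq_empty_iff.mpr fun x => ⟨x, lt_irrefl x⟩
  rwa [h0, measure_empty] at h

section Sojourn

variable {Ω : Type*} [MeasurableSpace Ω] {P : Measure Ω} {μ : Measure ℕ} {ξ : ℕ → Ω → ℕ}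

lemma measure_inter_preimage_eq_mul (hξ : IsIIDSeq P μ ξ) {p : (ℕ → ℕ) → Prop} {n : ℕ}
    (hp : DependsOn p (Set.Iio n)) (A : Set ℕ) :
    P ({ω | p (ξ · ω)} ∩ ξ n ⁻¹' A) = P {ω | p (ξ · ω)} * μ A := by
  rw [← measure_preimage hξ n A]
  refine (Indep_iff _ _ P).1 (indep_coordSigma hξ (S := ↑(Finset.range n)) (T := {n}) (by simp))
    _ _ (measurableSet_coordSigma (by simpa using hp)) ?_
  exact le_iSup₂ (f := fun i (_ : i ∈ ({n} : Set ℕ)) =>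
    MeasurableSpace.comap (ξ i) inferInstance) n rfl _ ⟨A, trivial, rfl⟩

variable [IsProbabilityMeasure P] (v : (ℕ → ℕ) → ℕ → ℕ∞)
  (hv_dep : ∀ n, DependsOn (v · n) (Set.Iio n))
  (hv_mono : ∀ η, (∀ i, 1 ≤ η i) → Monotone (v η))
  (hv_step : ∀ η, (∀ i, 1 ≤ η i) → ∀ n, (η n : ℕ∞) ≤ v η n → v η n < v η (n + 1))

include hv_dep hv_mono hv_step in
/-- `v` leaves level `t` at most once, and at each visit it leaves with probability at least
`μ {s | s ≤ t}`, independently of the past. -/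
lemma tsum_measure_eq_mul_le_one (hξ : IsIIDSeq P μ ξ) (hpos : ∀ᵐ ω ∂P, ∀ i, 1 ≤ ξ i ω)
    (t : ℕ) : (∑' n, P {ω | v (ξ · ω) n = t}) * μ {s | s ≤ t} ≤ 1 := by
  have hdep : ∀ n, DependsOn (fun η => v η n = t) (Set.Iio n) :=
    fun n η η' h => congrArg (· = (t : ℕ∞)) (hv_dep n h)
  let E : ℕ → Set Ω := fun n => {ω | v (ξ · ω) n = t} ∩ ξ n ⁻¹' {s | s ≤ t}
  have hdisj : ∀ n m, n < m → E n ∩ E m ⊆ {ω | ¬ ∀ i, 1 ≤ ξ i ω} := by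
    rintro n m hnm ω ⟨⟨hn, hξn⟩, hm, -⟩ hω
    have hup := hv_step _ hω n (by rw [hn]; exact_mod_cast hξn)
    have := hv_mono _ hω (Nat.succ_le_of_lt hnm)
    simp only [Set.mem_ofPred_eq] at hn hm
    rw [hn, ← hm] at hup
    exact (hup.trans_le this).false
  rw [← ENNReal.tsum_mul_right]
  simp_rw [← measure_inter_preimage_eq_mul hξ (hdep _)]
  rw [← measure_iUnion₀ (f := E)]
  · exact prob_le_one
  · intro n m hnm
    rcases lt_or_gt_of_ne hnm with h | h
    · exact measure_mono_null (hdisj n m h) (ae_iff.1 hpos)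
    · exact measure_mono_null ((Set.inter_comm _ _).subset.trans (hdisj m n h)) (ae_iff.1 hpos)
  · exact fun n => ((coordSigma_le hξ _ _ (measurableSet_coordSigma (ξ := ξ)
      (s := Finset.range n) (by simpa using hdep n))).inter
      (hξ.1 n (DiscreteMeasurableSpace.forall_measurableSet _))).nullMeasurableSet

include hv_mono in
lemma exists_level_window (hv_fin : ∀ η, (∀ i, 1 ≤ η i) → ∀ n, v η n ≠ ⊤)
    {bad : (ℕ → ℕ) → ℕ → Prop} {C : ℕ}
    (hwin : ∀ η, (∀ i, 1 ≤ η i) → ∀ n, bad η n → v η n < η n ∧ (η n : ℕ∞) ≤ v η n + C)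
    {η : ℕ → ℕ} (hη : ∀ i, 1 ≤ η i) (hunb : ∀ t : ℕ, ∃ n, (t : ℕ∞) < v η n)
    (hinf : {n | bad η n}.Infinite) (T₀ : ℕ) :
    ∃ c < C, ∃ s n, v η n = (T₀ + 1 + s : ℕ) ∧ η n = T₀ + 2 + c + s := by
  obtain ⟨n₁, hn₁⟩ := hunb T₀
  obtain ⟨n, hbad, hn⟩ := hinf.exists_gt n₁
  obtain ⟨hlt, hle⟩ := hwin _ hη n hbad
  obtain ⟨t, ht⟩ := ENat.ne_top_iff_exists.1 (hv_fin _ hη n)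
  have hT : T₀ < t := by exact_mod_cast hn₁.trans_le (ht ▸ hv_mono _ hη hn.le)
  rw [← ht] at hlt hle
  norm_cast at hlt hle
  exact ⟨η n - t - 1, by omega, t - T₀ - 1, n, by rw [← ht]; congr 1; omega, by omega⟩

include hv_dep hv_mono hv_step in
/-- A step whose `η n` falls in the window `(v, v + C]` occurs at level `t` with probability at
most `μ (t, t + C] / μ {1}`, which is summable over `t`; since `v` is unbounded only finitely
many such steps can occur. -/
lemma ae_finite_of_window [IsProbabilityMeasure μ] (hξ : IsIIDSeq P μ ξ)
    (hpos : ∀ᵐ ω ∂P, ∀ i, 1 ≤ ξ i ω) (hμ1 : μ {1} ≠ 0)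
    (hv_fin : ∀ η, (∀ i, 1 ≤ η i) → ∀ n, v η n ≠ ⊤) {bad : (ℕ → ℕ) → ℕ → Prop} {C : ℕ}
    (hwin : ∀ η, (∀ i, 1 ≤ η i) → ∀ n, bad η n → v η n < η n ∧ (η n : ℕ∞) ≤ v η n + C) :
    ∀ᵐ ω ∂P, (∀ t : ℕ, ∃ n, (t : ℕ∞) < v (ξ · ω) n) → {n | bad (ξ · ω) n}.Finite := by
  have hdep : ∀ (t : ℕ∞) n, DependsOn (fun η => v η n = t) (Set.Iio n) :=
    fun t n η η' h => congrArg (· = t) (hv_dep n h)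
  have hsoj : ∀ t : ℕ, 1 ≤ t → ∑' n, P {ω | v (ξ · ω) n = t} ≤ (μ {1})⁻¹ := fun t ht =>
    ENNReal.le_inv_iff_mul_le.2 <| (mul_le_mul_right (measure_mono (by simpa using ht)) _).trans
      (tsum_measure_eq_mul_le_one v hv_dep hv_mono hv_step hξ hpos t)
  let B := {ω | (∀ i, 1 ≤ ξ i ω) ∧ (∀ t : ℕ, ∃ n, (t : ℕ∞) < v (ξ · ω) n) ∧
    {n | bad (ξ · ω) n}.Infinite}
  have hcover : ∀ T₀ : ℕ, B ⊆ ⋃ c ∈ Finset.range C, ⋃ s : ℕ, ⋃ n : ℕ,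
      {ω | v (ξ · ω) n = (T₀ + 1 + s : ℕ)} ∩ ξ n ⁻¹' {T₀ + 2 + c + s} := by
    rintro T₀ ω ⟨hω, hunb, hinf⟩
    obtain ⟨c, hc, s, n, hv, hξn⟩ := exists_level_window v hv_mono hv_fin hwin hω hunb hinf T₀
    simp only [Set.mem_iUnion, Finset.mem_range]
    exact ⟨c, hc, s, n, hv, hξn⟩
  have hbound : ∀ T₀ : ℕ, P B ≤ C * ((μ {1})⁻¹ * μ {x | T₀ < x}) := fun T₀ => calc
    P B ≤ ∑ c ∈ Finset.range C, ∑' s, ∑' n,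
        P ({ω | v (ξ · ω) n = (T₀ + 1 + s : ℕ)} ∩ ξ n ⁻¹' {T₀ + 2 + c + s}) :=
      (measure_mono (hcover T₀)).trans <| (measure_biUnion_finset_le _ _).trans <|
        Finset.sum_le_sum fun c _ => (measure_iUnion_le _).trans <|
          ENNReal.tsum_le_tsum fun s => measure_iUnion_le _
    _ = ∑ c ∈ Finset.range C, ∑' s,
        (∑' n, P {ω | v (ξ · ω) n = (T₀ + 1 + s : ℕ)}) * μ {T₀ + 2 + c + s} := by
      simp_rw [measure_inter_preimage_eq_mul hξ (hdep _ _), ENNReal.tsum_mul_right]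
    _ ≤ ∑ c ∈ Finset.range C, ∑' s, (μ {1})⁻¹ * μ {T₀ + 2 + c + s} := by
      gcongr with c _ s
      exact hsoj _ (by omega)
    _ ≤ ∑ c ∈ Finset.range C, (μ {1})⁻¹ * μ {x | T₀ < x} := by
      gcongr with c
      rw [ENNReal.tsum_mul_left]
      gcongr
      exact tsum_measure_singleton_add_le μ (by omega)
    _ = _ := by simp
  have htend : Tendsto (fun T₀ : ℕ => C * ((μ {1})⁻¹ * μ {x | T₀ < x})) atTop (𝓝 0) := by
    simpa using ENNReal.Tendsto.const_mul (ENNReal.Tendsto.const_mul (tendsto_measure_Ioi μ)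
      (Or.inr (ENNReal.inv_ne_top.2 hμ1))) (Or.inr (ENNReal.natCast_ne_top C))
  have hB : P B = 0 := le_antisymm (ge_of_tendsto' htend hbound) zero_le
  filter_upwards [hpos, measure_eq_zero_iff_ae_notMem.1 hB] with ω hω hωB hunb
  exact Set.not_infinite.1 fun hinf => hωB ⟨hω, hunb, hinf⟩

end Sojourn

section AlmostSure

lemma measure_singleton_one_ne_zero {μ : Measure ℕ} [IsProbabilityMeasure μ] (hμ0 : μ {0} = 0)
    (hmono : ∀ m n : ℕ, 1 ≤ m → m ≤ n → μ {n} ≤ μ {m}) : μ {1} ≠ 0 := fun h1 => by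
  have : μ (⋃ n : ℕ, {n}) = 0 := measure_iUnion_null fun n => by
    rcases n with _ | n
    · exact hμ0
    · exact le_antisymm (h1 ▸ hmono 1 (n + 1) le_rfl (by omega)) zero_le
  rw [Set.iUnion_of_singleton, measure_univ] at this
  exact one_ne_zero this

variable {Ω : Type*} [MeasurableSpace Ω] {P : Measure Ω} {μ : Measure ℕ} {ξ : ℕ → Ω → ℕ}

lemma IsTypeOf.one_le [NeZero P] {d : ℕ} (h : IsTypeOf P ξ d) : 1 ≤ d := by
  obtain ⟨ω, hω⟩ := h.exists
  have : (1 : ℕ∞) ≤ d := hω ▸ le_sInf fun x ⟨m, hm, hx, _⟩ => hx ▸ Nat.one_le_cast.2 hm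
  exact_mod_cast this

lemma IsTypeOf.ae_ibmLimit_ne_top {d : ℕ} (h : IsTypeOf P ξ d) :
    ∀ᵐ ω ∂P, ibmLimit barrier (ξ · ω) d ≠ ⊤ := by
  filter_upwards [h] with ω hω
  have hne : {k : ℕ∞ | ∃ m : ℕ, 1 ≤ m ∧ k = m ∧ ibmLimit barrier (ξ · ω) m < ⊤}.Nonempty :=
    Set.nonempty_iff_ne_empty.2 fun he => by simp [he] at hω
  obtain ⟨m, -, hm, hlt⟩ := hω ▸ csInf_mem hne
  rw [Nat.cast_inj.1 hm]
  exact hlt.ne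

lemma ae_one_le (hξ : IsIIDSeq P μ ξ) (hμ0 : μ {0} = 0) : ∀ᵐ ω ∂P, ∀ i, 1 ≤ ξ i ω :=
  ae_all_iff.2 fun i => ae_iff.2 <| measure_mono_null (fun ω hω => by simpa using hω)
    ((measure_preimage hξ i {0}).trans hμ0)

variable (hξ : IsIIDSeq P μ ξ) (hpos : ∀ᵐ ω ∂P, ∀ i, 1 ≤ ξ i ω) (hμ1 : μ {1} ≠ 0)
  {Z Z' : Config} {b b' : ℤ}
include hξ hpos hμ1

lemma ae_unbounded_ibmTail (hZ : HasInfiniteTail Z b) :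
    ∀ i, 1 ≤ i → ∀ᵐ ω ∂P, ∀ t : ℕ, ∃ n, (t : ℕ∞) < ibmTail Z (ξ · ω) n (b + i) := by
  refine Int.leInduction ?_ fun i _ ih => ?_
  · filter_upwards [hpos] with ω hω t
    refine ⟨t + 1, ?_⟩
    rw [ibmTail_add_one hZ hω]
    exact (Nat.cast_lt.2 t.lt_succ_self).trans_le le_add_self
  · filter_upwards [hpos, ih, ae_infinite_setOf_eq hξ hμ1] with ω hω hi h1
    rw [← add_assoc]
    exact unbounded_ibmTail_succ hZ hω h1 hi

variable [IsProbabilityMeasure P] [IsProbabilityMeasure μ]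

lemma ae_finite_of_window_ibmTail (hZ : HasInfiniteTail Z b) {j : ℤ} (hj : tailSum Z j ≠ ⊤)
    {bad : (ℕ → ℕ) → ℕ → Prop} {C : ℕ} (hwin : ∀ η, (∀ i, 1 ≤ η i) → ∀ n, bad η n →
      ibmTail Z η n j < η n ∧ (η n : ℕ∞) ≤ ibmTail Z η n j + C) :
    ∀ᵐ ω ∂P, (∀ t : ℕ, ∃ n, (t : ℕ∞) < ibmTail Z (ξ · ω) n j) → {n | bad (ξ · ω) n}.Finite :=
  ae_finite_of_window (fun η n => ibmTail Z η n j) (fun _ _ _ h => ibmTail_congr h j)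
    (fun _ hη => ibmTail_mono hZ hη j) (fun _ hη _ => ibmTail_lt_succ hZ hη hj) hξ hpos hμ1
    (fun _ hη => ibmTail_ne_top hZ hη hj) hwin

/-- A ball lands in bin `j` only when `η n` falls between the tails at `j` and at `j - 1`, a window
whose width is the content of bin `j - 1`. -/
lemma ae_finite_addsBallAt (hZ : HasInfiniteTail Z b) {j : ℤ} (hj : tailSum Z j ≠ ⊤) :
    ∀ᵐ ω ∂P, ibmLimit Z (ξ · ω) (j - 1) ≠ ⊤ →
      (∀ t : ℕ, ∃ n, (t : ℕ∞) < ibmTail Z (ξ · ω) n j) → {n | AddsBallAt Z (ξ · ω) j n}.Finite := by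
  obtain ⟨M, hM⟩ := hZ.vanishesAbove
  have key : ∀ C : ℕ, ∀ᵐ ω ∂P, (∀ t : ℕ, ∃ n, (t : ℕ∞) < ibmTail Z (ξ · ω) n j) →
      {n | AddsBallAt Z (ξ · ω) j n ∧ ibm Z (ξ · ω) n (j - 1) ≤ C}.Finite := fun C =>
    ae_finite_of_window_ibmTail hξ hpos hμ1 hZ hj
      (bad := fun η n => AddsBallAt Z η j n ∧ ibm Z η n (j - 1) ≤ C)
      fun η _ n ⟨⟨hnear, hfar⟩, hC⟩ =>
      ⟨not_le.1 hfar, by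
        rw [ibmTail_sub_one hM, add_comm] at hnear
        exact hnear.trans (by gcongr)⟩
  filter_upwards [ae_all_iff.2 key] with ω hω hlim hunb
  lift ibmLimit Z (ξ · ω) (j - 1) to ℕ using hlim with C hC
  exact (hω C hunb).subset fun n hn => ⟨hn, hC ▸ le_iSup (fun n => ibm Z (ξ · ω) n (j - 1)) n⟩

lemma ae_ibmLimit_ne_top_of_le (hZ : HasInfiniteTail Z b) (hfin : ∀ j, b < j → tailSum Z j ≠ ⊤)
    {j₀ : ℤ} (hj₀ : b < j₀) (h₀ : ∀ᵐ ω ∂P, ibmLimit Z (ξ · ω) j₀ ≠ ⊤) :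
    ∀ j, j₀ ≤ j → ∀ᵐ ω ∂P, ibmLimit Z (ξ · ω) j ≠ ⊤ := by
  refine Int.leInduction h₀ fun j hj ih => ?_
  have hj1 := hfin (j + 1) (by omega)
  filter_upwards [ih, ae_finite_addsBallAt hξ hpos hμ1 hZ hj1,
    ae_unbounded_ibmTail hξ hpos hμ1 hZ (j + 1 - b) (by omega)] with ω hlim hfinite hunb
  rw [add_sub_cancel] at hunb
  exact ibmLimit_ne_top_of_finite (ne_top_of_le_ne_top hj1 (le_tailSum Z _))
    (hfinite (by rwa [add_sub_cancel_right]) hunb)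

/-- A step feeds the tail of `Z'` at `b' + i + 1` but not the tail of `Z` at `b + i + 1` only when
`η n` falls into a window of bounded width above the tail of `Z` at `b + i`. -/
lemma ae_ibmTail_le_add (hZ : HasInfiniteTail Z b) (hZ' : HasInfiniteTail Z' b')
    (hfin : ∀ i, 1 ≤ i → tailSum Z (b + i) ≠ ⊤) (hfin' : ∀ i, 1 ≤ i → tailSum Z' (b' + i) ≠ ⊤) :
    ∀ i, 1 ≤ i → ∀ᵐ ω ∂P, ∃ c : ℕ, ∀ n,
      ibmTail Z' (ξ · ω) n (b' + i) ≤ ibmTail Z (ξ · ω) n (b + i) + c := by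
  refine Int.leInduction ?_ fun i hi ih => ?_
  · filter_upwards [hpos] with ω hω
    lift tailSum Z' (b' + 1) to ℕ using hfin' 1 le_rfl with c hc
    refine ⟨c, fun n => ?_⟩
    rw [ibmTail_add_one hZ' hω, ibmTail_add_one hZ hω, ← hc, add_comm (c : ℕ∞)]
    gcongr
    exact le_add_self
  · have key : ∀ c : ℕ, ∀ᵐ ω ∂P, (∀ t : ℕ, ∃ n, (t : ℕ∞) < ibmTail Z (ξ · ω) n (b + i)) →
        {n | ¬ (ξ n ω : ℕ∞) ≤ ibmTail Z (ξ · ω) n (b + i) ∧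
          (ξ n ω : ℕ∞) ≤ ibmTail Z' (ξ · ω) n (b' + i) ∧
          ibmTail Z' (ξ · ω) n (b' + i) ≤ ibmTail Z (ξ · ω) n (b + i) + c}.Finite := fun c =>
      ae_finite_of_window_ibmTail hξ hpos hμ1 hZ (hfin i hi)
        (bad := fun η n => ¬ (η n : ℕ∞) ≤ ibmTail Z η n (b + i) ∧
          (η n : ℕ∞) ≤ ibmTail Z' η n (b' + i) ∧
          ibmTail Z' η n (b' + i) ≤ ibmTail Z η n (b + i) + c)
        fun _ _ _ h => ⟨not_le.1 h.1, h.2.1.trans h.2.2⟩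
    filter_upwards [hpos, ih, ae_all_iff.2 key, ae_unbounded_ibmTail hξ hpos hμ1 hZ i hi]
      with ω hω ⟨c, hc⟩ hkey hunb
    have hwind := (hkey c hunb).subset fun n (hn : _ ∧ _) => ⟨hn.1, hn.2, hc n⟩
    lift tailSum Z' (b' + (i + 1)) to ℕ using hfin' (i + 1) (by omega) with c' hc'
    refine ⟨c' + hwind.toFinset.card, fun n =>
      (ibmTail_le_add_count hZ hZ' hω (b + (i + 1)) (b' + (i + 1)) n).trans ?_⟩
    simp only [← add_assoc, add_sub_cancel_right] at hc' ⊢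
    rw [← hc', Nat.cast_add, ← add_assoc]
    gcongr
    exact_mod_cast Nat.count_le_card hwind n

/-- Boundedness of bins spreads to the right within `Z`, and comparing tails moves it from bin
`b + (k - 1 - b')` of `Z` to bin `k - 1` of `Z'`. -/
lemma ae_finite_addsBallAt_of_ibmLimit_ne_top (hZ : HasInfiniteTail Z b)
    (hZ' : HasInfiniteTail Z' b') (hfin : ∀ j, b < j → tailSum Z j ≠ ⊤)
    (hfin' : ∀ j, b' < j → tailSum Z' j ≠ ⊤)
    (h0 : ∀ i, 1 ≤ i → tailSum Z (b + i) ≤ tailSum Z' (b' + i)) {d : ℤ} (hd : 1 ≤ d)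
    (hbdd : ∀ᵐ ω ∂P, ibmLimit Z (ξ · ω) (b + d) ≠ ⊤) {k : ℤ} (hk : b' + d < k) :
    ∀ᵐ ω ∂P, {n | AddsBallAt Z' (ξ · ω) k n}.Finite := by
  have hκ : 1 ≤ k - 1 - b' := by omega
  filter_upwards [hpos,
    ae_ibmLimit_ne_top_of_le hξ hpos hμ1 hZ hfin (by omega) hbdd (b + (k - 1 - b')) (by omega),
    ae_ibmTail_le_add hξ hpos hμ1 hZ hZ' (fun i hi => hfin _ (by omega))
      (fun i hi => hfin' _ (by omega)) _ hκ,
    ae_unbounded_ibmTail hξ hpos hμ1 hZ' (k - b') (by omega),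
    ae_finite_addsBallAt hξ hpos hμ1 hZ' (hfin' k (by omega))] with ω hω hlim ⟨c, hc⟩ hunb hfinite
  rw [add_sub_cancel] at hunb
  refine hfinite (ne_top_of_le_ne_top (b := ibmLimit Z (ξ · ω) (b + (k - 1 - b')) + c)
    (by simpa using hlim) (iSup_le fun n => ?_)) hunb
  have := ibm_le_of_ibmTail_le hZ hZ' hω h0 hκ (hfin' _ (by omega)) (hc n)
  rw [add_sub_cancel] at this
  exact this.trans (by gcongr; exact le_iSup (fun n => ibm Z (ξ · ω) n _) n)

end AlmostSure

section Surgery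

variable {Ω : Type*} [MeasurableSpace Ω] {P : Measure Ω} {μ : Measure ℕ} {ξ : ℕ → Ω → ℕ}

lemma measure_prefix_inter_future (hξ : IsIIDSeq P μ ξ) (a : ℕ → ℕ) (N : ℕ)
    {q : ℕ → (ℕ → ℕ) → Prop} (hq : ∀ n, DependsOn (q n) (Set.Iic n)) :
    P ({ω | ∀ i < N, ξ i ω = a i} ∩ {ω | ∀ n, q n fun i => ξ (N + i) ω})
      = P {ω | ∀ i < N, ξ i ω = a i} * P {ω | ∀ n, q n fun i => ξ (N + i) ω} := by
  refine (Indep_iff _ _ P).1 (indep_coordSigma hξ (S := ↑(Finset.range N)) (T := Set.Ici N)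
    (Set.disjoint_left.2 fun i hi hi' => (Finset.mem_range.1 hi).not_ge hi')) _ _ ?_ ?_
  · exact measurableSet_coordSigma (p := fun η => ∀ i < N, η i = a i) fun η η' h =>
      propext (forall₂_congr fun i hi => by rw [h i (by simpa using hi)])
  · rw [Set.ofPred_forall]
    refine MeasurableSet.iInter fun n => coordSigma_mono (S := ↑(Finset.Ico N (N + n + 1)))
      (fun i hi => (Finset.mem_Ico.1 hi).1) _ (measurableSet_coordSigma
        (p := fun η => q n fun i => η (N + i)) fun η η' h => hq n fun i hi => h (N + i) ?_)
    rw [Finset.mem_coe, Finset.mem_Ico]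
    exact ⟨by omega, by simp only [Set.mem_Iic] at hi; omega⟩

def padOne {N : ℕ} (a : Fin N → ℕ) (i : ℕ) : ℕ := if h : i < N then a ⟨i, h⟩ else 1

lemma exists_pos_measure_prefix_inter_future [IsProbabilityMeasure P]
    (hpos : ∀ᵐ ω ∂P, ∀ i, 1 ≤ ξ i ω) {Z : Config} {k : ℤ}
    (hfinite : ∀ᵐ ω ∂P, {n | AddsBallAt Z (ξ · ω) k n}.Finite) :
    ∃ N, ∃ a : Fin N → ℕ, 0 < P ({ω | ∀ i < N, ξ i ω = padOne a i} ∩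
      {ω | ∀ n, ¬ AddsBallAt (ibm Z (padOne a) N) (fun i => ξ (N + i) ω) k n} ∩
      {ω | ∀ i, 1 ≤ ξ i ω}) := by
  let E : (N : ℕ) → (Fin N → ℕ) → Set Ω := fun N a => {ω | ∀ i < N, ξ i ω = padOne a i} ∩
    {ω | ∀ n, ¬ AddsBallAt (ibm Z (padOne a) N) (fun i => ξ (N + i) ω) k n} ∩ {ω | ∀ i, 1 ≤ ξ i ω}
  have hcover : ∀ᵐ ω ∂P, ω ∈ ⋃ N, ⋃ a, E N a := by
    filter_upwards [hpos, hfinite] with ω hω hfin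
    obtain ⟨M, hM⟩ := hfin.bddAbove
    have hpre : ∀ i < M + 1, ξ i ω = padOne (fun i : Fin (M + 1) => ξ i ω) i :=
      fun i hi => by simp [padOne, hi]
    refine Set.mem_iUnion₂.2 ⟨M + 1, fun i => ξ i ω, ⟨hpre, fun n hn => ?_⟩, hω⟩
    rw [← ibm_congr hpre, ← addsBallAt_add] at hn
    have := hM hn
    omega
  have hU : P (⋃ N, ⋃ a, E N a) ≠ 0 := fun h0 => by
    obtain ⟨ω, h1, h2⟩ := (hcover.and (measure_eq_zero_iff_ae_notMem.1 h0)).exists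
    exact h2 h1
  obtain ⟨N, hN⟩ := exists_measure_pos_of_not_measure_iUnion_null hU
  obtain ⟨a, ha⟩ := exists_measure_pos_of_not_measure_iUnion_null hN.ne'
  exact ⟨N, a, ha⟩

/-- Replacing, in a prefix of positive probability, every step that hits bin `k` by the value `1`
leaves the tails up to `k` unchanged, so the hit-free future still avoids `k`; the new prefix
keeps positive probability because `μ {1} ≠ 0`. -/
lemma pos_measure_forall_not_addsBallAt [IsProbabilityMeasure P] (hξ : IsIIDSeq P μ ξ)
    (hpos : ∀ᵐ ω ∂P, ∀ i, 1 ≤ ξ i ω) (hμ1 : μ {1} ≠ 0) {Z : Config} {b k : ℤ}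
    (hZ : HasInfiniteTail Z b) (hk : 1 ≤ tailSum Z k)
    (hfinite : ∀ᵐ ω ∂P, {n | AddsBallAt Z (ξ · ω) k n}.Finite) :
    0 < P {ω | ∀ n, ¬ AddsBallAt Z (ξ · ω) k n} := by
  obtain ⟨N, a, ha⟩ := exists_pos_measure_prefix_inter_future hpos hfinite
  set η₀ := padOne a
  set η₁ := avoidBin Z η₀ k
  obtain ⟨ω₀, ⟨hpre₀, -⟩, hω₀⟩ := nonempty_of_measure_ne_zero ha.ne'
  have hη₀ : ∀ i, 1 ≤ η₀ i := fun i => by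
    by_cases hi : i < N
    · exact hpre₀ i hi ▸ hω₀ i
    · simp [η₀, padOne, hi]
  have hcyl₀ : 0 < P {ω | ∀ i < N, ξ i ω = η₀ i} := ha.trans_le (measure_mono fun _ h => h.1.1)
  have hfut : 0 < P {ω | ∀ n, ¬ AddsBallAt (ibm Z η₀ N) (fun i => ξ (N + i) ω) k n} :=
    ha.trans_le (measure_mono fun _ h => h.1.2)
  have hcyl₁ : 0 < P {ω | ∀ i < N, ξ i ω = η₁ i} := by
    rw [measure_prefix_eq hξ, pos_iff_ne_zero, Finset.prod_ne_zero_iff] at hcyl₀ ⊢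
    intro i hi
    simp only [η₁, avoidBin]
    split_ifs
    · exact hμ1
    · exact hcyl₀ i hi
  have hprod := measure_prefix_inter_future hξ η₁ N
    (q := fun n η => ¬ AddsBallAt (ibm Z η₀ N) η k n)
    fun n η η' h => propext (not_congr (addsBallAt_congr fun i hi => h i hi))
  refine ((ENNReal.mul_pos hcyl₁.ne' hfut.ne').trans_eq hprod.symm).trans_le (measure_mono_ae ?_)
  filter_upwards [hpos] with ω hω ⟨hcyl, hno⟩ n hn
  rcases lt_or_ge n N with hnN | hnN
  · exact not_addsBallAt_avoidBin hZ hη₀ hk n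
      ((addsBallAt_congr fun i hi => hcyl i (by omega)).1 hn)
  · obtain ⟨m, rfl⟩ := Nat.exists_eq_add_of_le hnN
    rw [addsBallAt_add, ibm_congr hcyl, addsBallAt_iff_of_tailSum_eq
      (hZ.ibm (one_le_avoidBin hη₀) N) (hZ.ibm hη₀ N) (fun i => hω (N + i))
      (fun j hj => ibmTail_avoidBin hZ hη₀ N hj)] at hn
    exact hno m hn

end Surgery

end IBM

open IBM in
theorem stmt13_general {Ω : Type*} [MeasurableSpace Ω] (P : Measure Ω) [IsProbabilityMeasure P]
    (μ : Measure ℕ) [IsProbabilityMeasure μ] (hμ0 : μ {0} = 0)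
    (hmono : ∀ m n : ℕ, 1 ≤ m → m ≤ n → μ {n} ≤ μ {m})
    (ξ : ℕ → Ω → ℕ) (hξ : IsIIDSeq P μ ξ)
    (d : ℕ) (htype : IsTypeOf P ξ (d : ℕ∞))
    (X₀ : Config) (hloc : ∀ j : ℤ, X₀ j < ⊤)
    (hfront : X₀ 0 ≠ 0 ∧ ∀ j : ℤ, 0 < j → X₀ j = 0)
    (δ k : ℤ) (hδk : δ + (d : ℤ) < k) (hk0 : k ≤ 0) :
    0 < P {ω | ibmLimit (fun j => if j = δ then ⊤ else X₀ j) (fun i => ξ i ω) k =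
        (if k = δ then ⊤ else X₀ k)} := by
  have hpos := ae_one_le hξ hμ0
  have hμ1 := measure_singleton_one_ne_zero hμ0 hmono
  have hd := htype.one_le
  have hX₀ : VanishesAbove X₀ 0 := hfront.2
  have hδ : δ ≤ 0 := by omega
  have hZ₀ := hasInfiniteTail_withBarrier hX₀ hδ
  have hk : 1 ≤ tailSum (withBarrier X₀ δ) k := by
    refine le_trans ?_ ((le_tailSum _ 0).trans (tailSum_antitone _ hk0))
    simpa [Order.one_le_iff_ne_zero, withBarrier, show (0 : ℤ) ≠ δ by omega] using hfront.1
  have hfinite := ae_finite_addsBallAt_of_ibmLimit_ne_top hξ hpos hμ1 hasInfiniteTail_barrier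
    hZ₀ (fun j hj => by simp [tailSum_barrier_eq_zero hj])
    (fun j => tailSum_withBarrier_ne_top hX₀ hδ fun j => (hloc j).ne)
    (fun i hi => by simp [tailSum_barrier_eq_zero (show (0 : ℤ) < i by omega)])
    (d := d) (by exact_mod_cast hd) (by simpa using htype.ae_ibmLimit_ne_top) hδk
  refine (pos_measure_forall_not_addsBallAt hξ hpos hμ1 hZ₀ hk hfinite).trans_le
    (measure_mono fun ω hω => ?_)
  exact ibmLimit_eq_of_forall_not_addsBallAt hω

/-- Assume `(μ(n), n ≥ 1)` is non-increasing with finite type `d`. Let `X₀`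
be locally finite with front at `0`, and for `δ < 0` let `X₀^(δ)` be `X₀` with an infinite
barrier placed at `δ`. Then for any `δ, k` with `δ + d < k ≤ 0`, with positive probability
no ball is ever added to bin `k` by the IBM(μ) started from `X₀^(δ)`. -/
theorem stmt13 {Ω : Type*} [MeasurableSpace Ω] (P : Measure Ω) [IsProbabilityMeasure P]
    (μ : Measure ℕ) [IsProbabilityMeasure μ] (hμ0 : μ {0} = 0)
    (hmono : ∀ m n : ℕ, 1 ≤ m → m ≤ n → μ {n} ≤ μ {m})
    (ξ : ℕ → Ω → ℕ) (hξ : IsIIDSeq P μ ξ)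
    (d : ℕ) (htype : IsTypeOf P ξ (d : ℕ∞))
    (X₀ : Config) (hloc : ∀ j : ℤ, X₀ j < ⊤)
    (hfront : X₀ 0 ≠ 0 ∧ ∀ j : ℤ, 0 < j → X₀ j = 0)
    (δ k : ℤ) (hδ : δ < 0) (hδk : δ + (d : ℤ) < k) (hk0 : k ≤ 0) :
    0 < P {ω | ibmLimit (fun j => if j = δ then ⊤ else X₀ j) (fun i => ξ i ω) k =
        (if k = δ then ⊤ else X₀ k)} :=
  stmt13_general P μ hμ0 hmono ξ hξ d htype X₀ hloc hfront δ k hδk hk0
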